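/- arXiv:1506.01456 — 2 statements merged into one kernel-verified Lean document; each statement's English description precedes it below -/
import Mathlib

section
/- Let $\Phi \in \mathbb{C}[y_1,\dots,y_n]$ be defined as $\Phi = \lambda^2 - \lambda\,\mathrm{Tr}(M_n) + \delta$ where $M_n = \prod_{j=n}^{1}\begin{pmatrix}0&1\\-\delta_j&p'_j(y_j)\end{pmatrix}$, $p_j(y_j) = y_j^{d_j} + q_j(y_j)$ is monic of degree $d_j \ge 2$ with $\deg q_j \le d_j - 1$, $\delta = \delta_1\cdots\delta_n \ne 0$, and $\lambda \in \mathbb{C}$. Then $\Phi \notin \langle \varphi_1, \dots, \varphi_n \rangle$, where $\varphi_i = p_i(y_i) - y_{i+1} - \delta_i y_{i-1}$ (indices mod $n$). -/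
/-!
In the graded lexicographic order the leading monomial of `φ i` is `X i ^ d i`. Leading monomials
that are powers of pairwise distinct variables make `{φ i}` a Gröbner basis, so every nonzero
element of `⟨φ₁, …, φₙ⟩` has a leading monomial divisible by some `X i ^ d i`. The leading
monomial of `Φ` is that of the `(1, 1)` entry of the transfer-matrix product,
`∏ X j ^ (d j - 1)`, and no `X i ^ d i` divides it.
-/

theorem Finsupp.single_le_of_single_le_add_single {σ : Type*} {i j : σ} (hij : i ≠ j)
    {a b : ℕ} {x : σ →₀ ℕ} (h : Finsupp.single i a ≤ x + Finsupp.single j b) :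
    Finsupp.single i a ≤ x := by
  rw [Finsupp.single_le_iff] at h ⊢
  simpa [Finsupp.single_apply, hij.symm] using h

namespace MonomialOrder

open MvPolynomial

variable {σ R : Type*} [CommRing R] {m : MonomialOrder σ}

theorem degree_eq_of_degree_add_ne {f g : MvPolynomial σ R} (hf : m.degree (f + g) ≠ m.degree f)
    (hg : m.degree (f + g) ≠ m.degree g) : m.degree f = m.degree g := by
  by_contra hne
  have := degree_add_of_ne (m := m) hne
  rcases max_choice (m.toSyn (m.degree f)) (m.toSyn (m.degree g)) with h | h <;>
    rw [h, m.toSyn.injective.eq_iff] at this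
  exacts [hf this, hg this]

section PurePowers

variable [DecidableEq σ] {d : σ → ℕ} {φ : σ → MvPolynomial σ R}

theorem exists_single_le_degree_mul_add (hdeg : ∀ i, m.degree (φ i) = Finsupp.single i (d i))
    (hunit : ∀ i, IsUnit (m.leadingCoeff (φ i))) {k : σ} {t : Finset σ} (hk : k ∉ t)
    (ht : ∀ z ∈ Ideal.span (φ '' t), z ≠ 0 → ∃ j ∈ t, Finsupp.single j (d j) ≤ m.degree z)
    (g z : MvPolynomial σ R) (hz : z ∈ Ideal.span (φ '' t)) (hf : g * φ k + z ≠ 0) :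
    ∃ i ∈ insert k t, Finsupp.single i (d i) ≤ m.degree (g * φ k + z) := by
  induction hg : m.toSyn (m.degree g) using WellFoundedLT.induction generalizing g z with
  | ind a ih => ?_
  by_cases hg0 : g = 0
  · subst hg0
    rw [zero_mul, zero_add] at hf ⊢
    obtain ⟨j, hj, hle⟩ := ht z hz hf
    exact ⟨j, Finset.mem_insert_of_mem hj, hle⟩
  have hu : m.degree (g * φ k) = m.degree g + Finsupp.single k (d k) := by
    rw [degree_mul_of_isRegular_right hg0 (hunit k).isRegular, hdeg]
  by_cases hfu : m.degree (g * φ k + z) = m.degree (g * φ k)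
  · exact ⟨k, Finset.mem_insert_self k t, hfu ▸ hu ▸ le_add_self⟩
  have hz0 : z ≠ 0 := by rintro rfl; exact hfu (by rw [add_zero])
  obtain ⟨j, hj, hjz⟩ := ht z hz hz0
  by_cases hfz : m.degree (g * φ k + z) = m.degree z
  · exact ⟨j, Finset.mem_insert_of_mem hj, hfz ▸ hjz⟩
  -- The leading terms of `g * φ k` and `z` cancel; as `j ≠ k`, the leading monomial of `g`
  -- is divisible by that of `φ j`, and reducing `g` by `φ j` lowers it.
  have hjg : Finsupp.single j (d j) ≤ m.degree g :=
    Finsupp.single_le_of_single_le_add_single (by rintro rfl; exact hk hj)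
      (hu ▸ degree_eq_of_degree_add_ne hfu hfz ▸ hjz)
  by_cases hg00 : m.degree g = 0
  · refine ⟨j, Finset.mem_insert_of_mem hj, ?_⟩
    rw [hg00, nonpos_iff_eq_zero] at hjg
    exact hjg ▸ _root_.zero_le
  set c := monomial (m.degree g - m.degree (φ j)) ((hunit j).unit⁻¹ * m.leadingCoeff g)
  have hred : g * φ k + z = m.reduce (hunit j) g * φ k + (z + c * φ j * φ k) := by
    simp only [reduce, c]; ring
  rw [hred] at hf ⊢
  refine ih _ ?_ _ _ ?_ hf rfl
  · exact hg ▸ degree_reduce_lt (hunit j) (hdeg j ▸ hjg) hg00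
  · exact Ideal.add_mem _ hz (Ideal.mul_mem_right _ _ (Ideal.mul_mem_left _ _
      (Ideal.subset_span ⟨j, hj, rfl⟩)))

theorem exists_single_le_degree_of_mem_span (hdeg : ∀ i, m.degree (φ i) = Finsupp.single i (d i))
    (hunit : ∀ i, IsUnit (m.leadingCoeff (φ i))) (s : Finset σ) {f : MvPolynomial σ R}
    (hf : f ∈ Ideal.span (φ '' s)) (hf0 : f ≠ 0) :
    ∃ i ∈ s, Finsupp.single i (d i) ≤ m.degree f := by
  induction s using Finset.induction_on generalizing f with
  | empty => simp_all
  | insert k t hk ih =>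
    rw [Finset.coe_insert, Set.image_insert_eq, Ideal.mem_span_insert] at hf
    obtain ⟨g, z, hz, rfl⟩ := hf
    exact exists_single_le_degree_mul_add hdeg hunit hk (fun z hz hz0 => ih hz hz0) g z hz hf0

end PurePowers

theorem toSyn_degree_mul_lt {f g : MvPolynomial σ R} {a b : σ →₀ ℕ}
    (hf : m.toSyn (m.degree f) ≤ m.toSyn a) (hg : m.toSyn (m.degree g) < m.toSyn b) :
    m.toSyn (m.degree (f * g)) < m.toSyn (a + b) :=
  degree_mul_le.trans_lt (by rw [map_add, map_add]; exact add_lt_add_of_le_of_lt hf hg)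

variable [IsDomain R]

theorem degree_list_prod_transferMatrix {ι : Type*}
    {T : ι → Matrix (Fin 2) (Fin 2) (MvPolynomial σ R)}
    (h00 : ∀ j, T j 0 0 = 0) (h01 : ∀ j, T j 0 1 = 1)
    (h10 : ∀ j, m.toSyn (m.degree (T j 1 0)) < m.toSyn (m.degree (T j 1 1)))
    (l : List ι) (hl : l ≠ []) :
    m.degree ((l.map T).prod 1 1) = (l.map fun j => m.degree (T j 1 1)).sum ∧
      m.toSyn (m.degree ((l.map T).prod 0 0)) < m.toSyn (l.map fun j => m.degree (T j 1 1)).sum ∧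
      m.toSyn (m.degree ((l.map T).prod 0 1)) < m.toSyn (l.map fun j => m.degree (T j 1 1)).sum ∧
      m.toSyn (m.degree ((l.map T).prod 1 0)) <
        m.toSyn (l.map fun j => m.degree (T j 1 1)).sum := by
  have hpos : ∀ j, 0 < m.toSyn (m.degree (T j 1 1)) := fun j => (m.zero_le _).trans_lt (h10 j)
  have hT11 : ∀ j, T j 1 1 ≠ 0 := fun j h => (hpos j).ne' (by rw [h, degree_zero, map_zero])
  induction l with
  | nil => exact absurd rfl hl
  | cons a t ih =>
    by_cases ht : t = []
    · subst ht
      refine ⟨?_, ?_, ?_, ?_⟩ <;> simp [h00, h01, hpos, h10]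
    obtain ⟨ih11, ih00, ih01, ih10⟩ := ih ht
    set W := (t.map T).prod
    set E := (t.map fun j => m.degree (T j 1 1)).sum
    have hW11 : W 1 1 ≠ 0 := fun h =>
      (ih00.trans_le' (m.zero_le _)).ne' (by rw [← ih11, h, degree_zero, map_zero])
    have hE : m.toSyn E < m.toSyn (m.degree (T a 1 1) + E) := by
      rw [map_add]; exact lt_add_of_pos_left _ (hpos a)
    have e : ∀ r s, (T a * W) r s = T a r 0 * W 0 s + T a r 1 * W 1 s := fun r s => by
      rw [Matrix.mul_apply, Fin.sum_univ_two]
    rw [List.map_cons, List.prod_cons, List.map_cons, List.sum_cons, e, e, e, e, h00, h01]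
    simp only [zero_mul, one_mul, zero_add]
    have hlow : m.toSyn (m.degree (T a 1 0 * W 0 1)) < m.toSyn (m.degree (T a 1 1) + E) :=
      toSyn_degree_mul_lt (h10 a).le ih01
    have hdeg11 : m.degree (T a 1 1 * W 1 1) = m.degree (T a 1 1) + E := by
      rw [degree_mul (hT11 a) hW11, ih11]
    refine ⟨?_, ih10.trans hE, ih11 ▸ hE, ?_⟩
    · rw [add_comm, degree_add_of_lt (hdeg11 ▸ hlow), hdeg11]
    · refine degree_add_le.trans_lt (max_lt ?_ ?_)
      · exact toSyn_degree_mul_lt (h10 a).le ih00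
      · exact toSyn_degree_mul_lt le_rfl ih10

theorem degree_C_sub_C_mul_trace_add_C {W : Matrix (Fin 2) (Fin 2) (MvPolynomial σ R)}
    (h00 : m.toSyn (m.degree (W 0 0)) < m.toSyn (m.degree (W 1 1))) (h11 : m.degree (W 1 1) ≠ 0)
    {c : R} (hc : c ≠ 0) (a b : R) :
    m.degree (C a - C c * W.trace + C b) = m.degree (W 1 1) := by
  have hpos : 0 < m.toSyn (m.degree (W 1 1)) := by
    rwa [m.toSyn_lt_iff_ne_zero, ne_eq, m.toSyn_eq_zero_iff]
  have hdeg : m.degree (C c * W 1 1) = m.degree (W 1 1) := by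
    rw [degree_mul (C_ne_zero.mpr hc) (fun h => h11 (by rw [h, degree_zero])), degree_C, zero_add]
  have hlow : m.toSyn (m.degree (C a - C c * W 0 0 + C b)) <
      m.toSyn (m.degree (-(C c * W 1 1))) := by
    rw [degree_neg, hdeg]
    refine degree_add_le.trans_lt (max_lt (degree_sub_le.trans_lt (max_lt ?_ ?_)) ?_)
    · rwa [degree_C, map_zero]
    · exact degree_mul_le.trans_lt (by rwa [degree_C, zero_add])
    · rwa [degree_C, map_zero]
  have e : C a - C c * W.trace + C b = -(C c * W 1 1) + (C a - C c * W 0 0 + C b) := by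
    rw [Matrix.trace_fin_two]; ring
  rw [e, degree_add_of_lt hlow, degree_neg, hdeg]

end MonomialOrder

section DegLex

open MvPolynomial MonomialOrder

variable {σ R : Type*} [CommRing R] [LinearOrder σ] [WellFoundedGT σ]

theorem degLex_degree_monomial_add {v : σ →₀ ℕ} {c : R} (hc : c ≠ 0) {g : MvPolynomial σ R}
    (hg : g.totalDegree < v.degree) :
    degLex.degree (monomial v c + g) = v ∧ degLex.leadingCoeff (monomial v c + g) = c := by
  classical
  have hlt : degLex.toSyn (degLex.degree g) < degLex.toSyn (degLex.degree (monomial v c)) := by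
    rw [MonomialOrder.degree_monomial, if_neg hc, degLex_lt_iff, Finsupp.DegLex.lt_iff]
    exact Or.inl (by simpa [degree_degLexDegree] using hg)
  rw [degree_add_of_lt hlt, leadingCoeff_add_of_lt hlt, MonomialOrder.degree_monomial, if_neg hc,
    MonomialOrder.leadingCoeff_monomial]
  exact ⟨rfl, rfl⟩

end DegLex

section Univariate

open MvPolynomial MonomialOrder

variable {σ R : Type*} [CommRing R] [Nontrivial R]

theorem totalDegree_aeval_X_le (q : Polynomial R) (i : σ) :
    (Polynomial.aeval (X i : MvPolynomial σ R) q).totalDegree ≤ q.natDegree := by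
  rw [Polynomial.aeval_eq_sum_range]
  refine (totalDegree_finsetSum _ _).trans (Finset.sup_le fun k hk => ?_)
  refine (totalDegree_smul_le _ _).trans ?_
  rw [totalDegree_X_pow]
  exact Finset.mem_range_succ_iff.mp hk

theorem totalDegree_X_add_C_mul_X_le (i j : σ) (c : R) :
    (X i + C c * X j : MvPolynomial σ R).totalDegree ≤ 1 :=
  (totalDegree_add _ _).trans (max_le (totalDegree_X _).le
    ((totalDegree_mul _ _).trans (by rw [totalDegree_C, totalDegree_X])))

variable [LinearOrder σ] [WellFoundedGT σ] {p : Polynomial R}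

theorem degLex_degree_aeval_X_sub (hp : p.Monic) (hd : 2 ≤ p.natDegree) (i : σ)
    {g : MvPolynomial σ R} (hg : g.totalDegree ≤ 1) :
    degLex.degree (Polynomial.aeval (X i) p - g) = Finsupp.single i p.natDegree ∧
      degLex.leadingCoeff (Polynomial.aeval (X i) p - g) = 1 := by
  obtain ⟨q, hpq, hq⟩ := (Polynomial.IsMonicOfDegree.mk rfl hp).exists_natDegree_lt (by omega)
  have e : Polynomial.aeval (X i) p - g =
      monomial (Finsupp.single i p.natDegree) 1 + (Polynomial.aeval (X i) q - g) := by
    nth_rewrite 1 [hpq]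
    rw [map_add, map_pow, Polynomial.aeval_X, X_pow_eq_monomial, add_sub_assoc]
  rw [e]
  refine degLex_degree_monomial_add one_ne_zero ?_
  rw [Finsupp.degree_single]
  refine (totalDegree_sub _ _).trans_lt (max_lt ?_ (by omega))
  exact (totalDegree_aeval_X_le q i).trans_lt hq

theorem degLex_degree_aeval_X_derivative [CharZero R] (hp : p.Monic) (hd : 2 ≤ p.natDegree)
    (i : σ) :
    degLex.degree (Polynomial.aeval (X i : MvPolynomial σ R) (Polynomial.derivative p)) =
      Finsupp.single i (p.natDegree - 1) := by
  obtain ⟨q, hpq, hq⟩ := (Polynomial.IsMonicOfDegree.mk rfl hp).exists_natDegree_lt (by omega)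
  have e : Polynomial.aeval (X i : MvPolynomial σ R) (Polynomial.derivative p) =
      monomial (Finsupp.single i (p.natDegree - 1)) (p.natDegree : R) +
        Polynomial.aeval (X i) (Polynomial.derivative q) := by
    nth_rewrite 1 [hpq]
    rw [Polynomial.derivative_add, Polynomial.derivative_X_pow, map_add, map_mul, map_pow,
      Polynomial.aeval_X, Polynomial.aeval_C, algebraMap_eq, C_mul_X_pow_eq_monomial]
  rw [e]
  refine (degLex_degree_monomial_add (Nat.cast_ne_zero.mpr (by omega)) ?_).1
  rw [Finsupp.degree_single]
  refine (totalDegree_aeval_X_le _ i).trans_lt ?_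
  have := Polynomial.natDegree_derivative_le q
  omega

theorem degLex_degree_neg_C_lt_aeval_X_derivative [CharZero R] (hp : p.Monic)
    (hd : 2 ≤ p.natDegree) (i : σ) (c : R) :
    degLex.toSyn (degLex.degree (-C c : MvPolynomial σ R)) < degLex.toSyn
      (degLex.degree (Polynomial.aeval (X i : MvPolynomial σ R) (Polynomial.derivative p))) := by
  rw [degree_neg, degree_C, degLex_degree_aeval_X_derivative hp hd, map_zero,
    toSyn_lt_iff_ne_zero, ne_eq, toSyn_eq_zero_iff, Finsupp.single_eq_zero]
  omega

end Univariate

section TransferMatrix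

open MvPolynomial MonomialOrder

variable {σ R : Type*} [CommRing R] [IsDomain R] [CharZero R] [LinearOrder σ] [WellFoundedGT σ]

theorem degLex_degree_list_prod_transferMatrix (c : σ → R)
    {p : σ → Polynomial R} (hp : ∀ j, (p j).Monic) (hd : ∀ j, 2 ≤ (p j).natDegree)
    (l : List σ) (hl : l ≠ []) :
    degLex.degree ((l.map fun j => !![0, 1; -C (c j), Polynomial.aeval (X j)
        (Polynomial.derivative (p j))]).prod 1 1) =
        (l.map fun j => Finsupp.single j ((p j).natDegree - 1)).sum ∧
      degLex.toSyn (degLex.degree ((l.map fun j => !![0, 1; -C (c j), Polynomial.aeval (X j)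
        (Polynomial.derivative (p j))]).prod 0 0)) <
      degLex.toSyn (degLex.degree ((l.map fun j => !![0, 1; -C (c j), Polynomial.aeval (X j)
        (Polynomial.derivative (p j))]).prod 1 1)) := by
  obtain ⟨h11, h00, -, -⟩ := degree_list_prod_transferMatrix (m := degLex)
    (T := fun j => !![0, 1; -C (c j), Polynomial.aeval (X j) (Polynomial.derivative (p j))])
    (fun _ => rfl) (fun _ => rfl) (fun j => by
      simpa only [Matrix.of_apply, Matrix.cons_val_one, Matrix.cons_val_zero, Matrix.head_cons]
        using degLex_degree_neg_C_lt_aeval_X_derivative (hp j) (hd j) j (c j)) l hl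
  refine ⟨h11.trans ?_, h11 ▸ h00⟩
  simp only [Matrix.of_apply, Matrix.cons_val_one, Matrix.cons_val_zero,
    degLex_degree_aeval_X_derivative (hp _) (hd _)]

end TransferMatrix

open MonomialOrder
open MvPolynomial Matrix Polynomial

theorem stmt7_general (n : ℕ) [NeZero n] (d : Fin n → ℕ) (hd : ∀ i, 2 ≤ d i)
    (p : Fin n → Polynomial ℂ) (hmonic : ∀ i, (p i).Monic)
    (hdeg : ∀ i, (p i).natDegree = d i)
    (δ : Fin n → ℂ)
    (lam : ℂ) (hlam : lam ≠ 0)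
    (M : Matrix (Fin 2) (Fin 2) (MvPolynomial (Fin n) ℂ))
    (hM : M = ((List.ofFn fun j : Fin n =>
        (!![0, 1; -MvPolynomial.C (δ j), Polynomial.aeval (X j) (derivative (p j))] :
          Matrix (Fin 2) (Fin 2) (MvPolynomial (Fin n) ℂ))).reverse).prod)
    (Φ : MvPolynomial (Fin n) ℂ)
    (hΦ : Φ = MvPolynomial.C (lam ^ 2) - MvPolynomial.C lam * Matrix.trace M
        + MvPolynomial.C (∏ i, δ i))
    (φ : Fin n → MvPolynomial (Fin n) ℂ)
    (hφ : ∀ i, φ i = Polynomial.aeval (X i) (p i)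
        - X (i + 1) - MvPolynomial.C (δ i) * X (i - 1)) :
    Φ ∉ Ideal.span (Set.range φ) := by
  intro hmem
  have hd' i : 2 ≤ (p i).natDegree := hdeg i ▸ hd i
  have hφlead i : degLex.degree (φ i) = Finsupp.single i (d i) ∧
      degLex.leadingCoeff (φ i) = 1 := by
    rw [hφ i, sub_sub, ← hdeg i]
    exact degLex_degree_aeval_X_sub (hmonic i) (hd' i) i (totalDegree_X_add_C_mul_X_le _ _ _)
  rw [List.ofFn_eq_map, ← List.map_reverse] at hM
  obtain ⟨h11, h00⟩ := degLex_degree_list_prod_transferMatrix δ hmonic hd'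
    (List.finRange n).reverse (by simpa using NeZero.ne n)
  rw [← hM, List.map_reverse, List.sum_reverse, ← List.ofFn_eq_map, List.sum_ofFn] at h11
  rw [← hM] at h00
  set E := ∑ j, Finsupp.single j ((p j).natDegree - 1)
  have hE i : E i = d i - 1 := by simp only [E, Finsupp.coe_univ_sum_single, hdeg]
  have hE0 : E ≠ 0 := DFunLike.ne_iff.mpr ⟨0, by
    rw [hE, Finsupp.coe_zero, Pi.zero_apply]
    have := hd 0
    omega⟩
  have hΦdeg : degLex.degree Φ = E := by
    rw [hΦ, degree_C_sub_C_mul_trace_add_C h00 (h11 ▸ hE0) hlam, h11]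
  obtain ⟨i, -, hi⟩ := exists_single_le_degree_of_mem_span (m := degLex)
    (fun i => (hφlead i).1) (fun i => (hφlead i).2 ▸ isUnit_one) Finset.univ
    (by simpa using hmem) (ne_zero_of_degree_ne_zero (hΦdeg ▸ hE0))
  rw [hΦdeg, Finsupp.single_le_iff, hE] at hi
  have := hd i
  omega

/-- Corollary 4.4: `Φ ∉ ⟨φ₁, …, φₙ⟩`, where `Φ = λ² - λ Tr(Mₙ) + δ` is the multiplier
polynomial and `φᵢ = pᵢ(yᵢ) - y_{i+1} - δᵢ y_{i-1}` are the fixed-point equations. -/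
theorem stmt7 (n : ℕ) [NeZero n] (d : Fin n → ℕ) (hd : ∀ i, 2 ≤ d i)
    (p : Fin n → Polynomial ℂ) (hmonic : ∀ i, (p i).Monic)
    (hdeg : ∀ i, (p i).natDegree = d i)
    (δ : Fin n → ℂ) (hδ : (∏ i, δ i) ≠ 0)
    (lam : ℂ) (hlam : lam ≠ 0)
    (M : Matrix (Fin 2) (Fin 2) (MvPolynomial (Fin n) ℂ))
    (hM : M = ((List.ofFn fun j : Fin n =>
        (!![0, 1; -MvPolynomial.C (δ j), Polynomial.aeval (X j) (derivative (p j))] :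
          Matrix (Fin 2) (Fin 2) (MvPolynomial (Fin n) ℂ))).reverse).prod)
    (Φ : MvPolynomial (Fin n) ℂ)
    (hΦ : Φ = MvPolynomial.C (lam ^ 2) - MvPolynomial.C lam * Matrix.trace M
        + MvPolynomial.C (∏ i, δ i))
    (φ : Fin n → MvPolynomial (Fin n) ℂ)
    (hφ : ∀ i, φ i = Polynomial.aeval (X i) (p i)
        - X (i + 1) - MvPolynomial.C (δ i) * X (i - 1)) :
    Φ ∉ Ideal.span (Set.range φ) :=
  stmt7_general n d hd p hmonic hdeg δ lam hlam M hM Φ hΦ φ hφ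
end

section
/- Let $\Phi = \lambda^2 - \lambda(m_{11}^{(n)} + m_{22}^{(n)}) + \delta_1\cdots\delta_n \in \mathbb{C}[y_1,\dots,y_n]$ where $m^{(n)}_{ij}$ are the entries of $M_n = \prod_{j=n}^1 \begin{pmatrix}0&1\\-\delta_j&p'_j(y_j)\end{pmatrix}$, with $p_j$ monic of degree $d_j \ge 2$ and $\lambda \ne 0$. Then the leading monomial of $\Phi$ in the graded lexicographic order is $y_1^{d_1-1} y_2^{d_2-1} \cdots y_n^{d_n-1}$, with leading coefficient $-\lambda \, d_1 d_2 \cdots d_n$. -/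
open MvPolynomial Matrix Polynomial

/-- `y^a` is strictly smaller than `y^b` in the graded lexicographic order. -/
def GradedLexLT {n : ℕ} (a b : Fin n →₀ ℕ) : Prop :=
  (∑ i, a i) < (∑ i, b i) ∨
    ((∑ i, a i) = (∑ i, b i) ∧ ∃ j, a j < b j ∧ ∀ i, i < j → a i = b i)

/-- `μ` is the leading monomial of `g` for the graded lexicographic order. -/
def IsLeadingMonomial {n : ℕ} (g : MvPolynomial (Fin n) ℂ) (μ : Fin n →₀ ℕ) : Prop :=
  μ ∈ g.support ∧ ∀ ν ∈ g.support, ν = μ ∨ GradedLexLT ν μ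

/-!
Write `fⱼ = p'ⱼ(yⱼ)` and `D = ∑ⱼ (dⱼ - 1)`. Expanding the product of the transfer matrices
`[[0, 1], [-δⱼ, fⱼ]] = fⱼ E₂₂ + (constant matrix)`, every term other than `(∏ⱼ fⱼ) E₂₂`
omits some factor `fⱼ` and so has total degree at most `D - (dⱼ - 1) < D`. Hence
`Φ = -λ ∏ⱼ fⱼ + G` with `deg G < D`. For every monomial order the leading term of `fⱼ` is
`dⱼ yⱼ^{dⱼ-1}`, so `∏ⱼ fⱼ` has total degree `D` and degree-lexicographic leading term
`(∏ⱼ dⱼ) ∏ⱼ yⱼ^{dⱼ-1}`, which `G` cannot disturb.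
-/

open MonomialOrder

namespace MvPolynomial

variable {σ R : Type*} [CommSemiring R]

theorem aeval_X_eq_sum_monomial (j : σ) (q : R[X]) :
    Polynomial.aeval (X j : MvPolynomial σ R) q =
      ∑ e ∈ Finset.range (q.natDegree + 1), monomial (Finsupp.single j e) (q.coeff e) := by
  simp [aeval_eq_sum_range, MvPolynomial.X_pow_eq_monomial, MvPolynomial.smul_monomial]

theorem coeff_single_aeval_X (j : σ) (q : R[X]) (e : ℕ) :
    coeff (Finsupp.single j e) (Polynomial.aeval (X j : MvPolynomial σ R) q) = q.coeff e := by
  classical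
  rw [aeval_X_eq_sum_monomial, coeff_sum]
  simp only [coeff_monomial, (Finsupp.single_injective j).eq_iff, Finset.sum_ite_eq',
    Finset.mem_range]
  split_ifs with h
  · rfl
  · exact (Polynomial.coeff_eq_zero_of_natDegree_lt (by omega)).symm

theorem exists_eq_single_of_mem_support_aeval_X {j : σ} {q : R[X]} {ν : σ →₀ ℕ}
    (hν : ν ∈ (Polynomial.aeval (X j : MvPolynomial σ R) q).support) :
    ∃ e ≤ q.natDegree, ν = Finsupp.single j e := by
  classical
  rw [aeval_X_eq_sum_monomial] at hν
  obtain ⟨e, he, hνe⟩ := Finset.mem_biUnion.1 (support_sum hν)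
  exact ⟨e, Nat.lt_succ_iff.1 (Finset.mem_range.1 he),
    Finset.mem_singleton.1 (support_monomial_subset hνe)⟩

theorem totalDegree_mul_add_mul_lt {a x f y : MvPolynomial σ R} {v w : ℕ}
    (ha : a.totalDegree = 0) (hf : f.totalDegree ≤ w) (hx : x.totalDegree < v)
    (hy : y.totalDegree < v) : (a * x + f * y).totalDegree < v + w := by
  have hax := totalDegree_mul a x
  have hfy := totalDegree_mul f y
  have := totalDegree_add (a * x) (f * y)
  omega

theorem totalDegree_C_mul_add_C_lt {g : MvPolynomial σ R} {D : ℕ} (hg : g.totalDegree < D)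
    (a b : R) : (C a * g + C b).totalDegree < D := by
  have hmul := totalDegree_mul (C a) g
  have hadd := totalDegree_add (C a * g) (C b)
  rw [totalDegree_C] at hmul hadd
  omega

theorem degLex_degree_lt_of_totalDegree_lt [LinearOrder σ] [WellFoundedGT σ]
    {g : MvPolynomial σ R} {b : σ →₀ ℕ} (h : g.totalDegree < b.degree) :
    degLex.degree g ≺[degLex] b := by
  rw [degLex_lt_iff, Finsupp.DegLex.lt_iff]
  left
  simpa only [ofDegLex_toDegLex, degree_degLexDegree] using h

end MvPolynomial

namespace MonomialOrder

variable {σ R : Type*} (m : MonomialOrder σ)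

theorem degree_aeval_X [CommSemiring R] (j : σ) (q : R[X]) :
    m.degree (Polynomial.aeval (X j : MvPolynomial σ R) q) = Finsupp.single j q.natDegree := by
  rcases eq_or_ne q 0 with rfl | hq
  · simp
  apply m.toSyn.injective
  apply le_antisymm
  · refine m.degree_le_iff.2 fun ν hν => ?_
    obtain ⟨e, he, rfl⟩ := exists_eq_single_of_mem_support_aeval_X hν
    exact m.toSyn_monotone (Finsupp.single_le_single.2 he)
  · apply m.le_degree
    rw [MvPolynomial.mem_support_iff, coeff_single_aeval_X]
    exact Polynomial.leadingCoeff_ne_zero.2 hq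

theorem leadingCoeff_aeval_X [CommSemiring R] (j : σ) (q : R[X]) :
    m.leadingCoeff (Polynomial.aeval (X j : MvPolynomial σ R) q) = q.leadingCoeff := by
  rw [MonomialOrder.leadingCoeff, degree_aeval_X, coeff_single_aeval_X]
  rfl

variable [Fintype σ] [CommRing R] [IsDomain R] {q : σ → R[X]}

theorem degree_prod_aeval_X (hq : ∀ j, q j ≠ 0) :
    m.degree (∏ j, Polynomial.aeval (X j : MvPolynomial σ R) (q j)) =
      Finsupp.equivFunOnFinite.symm fun j => (q j).natDegree := by
  rw [m.degree_prod fun j _ h => hq j (by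
      rw [← Polynomial.leadingCoeff_eq_zero, ← leadingCoeff_aeval_X m, h, leadingCoeff_zero]),
    Finsupp.equivFunOnFinite_symm_eq_sum]
  exact Finset.sum_congr rfl fun j _ => degree_aeval_X m j (q j)

theorem leadingCoeff_prod_aeval_X (hq : ∀ j, q j ≠ 0) :
    m.leadingCoeff (∏ j, Polynomial.aeval (X j : MvPolynomial σ R) (q j)) =
      ∏ j, (q j).leadingCoeff := by
  simp only [m.leadingCoeff_prod_of_regular fun j _ => (leadingCoeff_aeval_X m j (q j) ▸
    IsRegular.of_ne_zero (Polynomial.leadingCoeff_ne_zero.2 (hq j))), leadingCoeff_aeval_X]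

end MonomialOrder

theorem gradedLexLT_iff {n : ℕ} {a b : Fin n →₀ ℕ} : GradedLexLT a b ↔ a ≺[degLex] b := by
  rw [degLex_lt_iff, Finsupp.DegLex.lt_iff, Finsupp.Lex.lt_iff]
  simp only [ofDegLex_toDegLex, Finsupp.degree_eq_sum, GradedLexLT, ofLex_toLex]
  exact or_congr_right (and_congr_right fun _ => exists_congr fun _ => and_comm)

theorem isLeadingMonomial_degLex_degree {n : ℕ} {g : MvPolynomial (Fin n) ℂ} (hg : g ≠ 0) :
    IsLeadingMonomial g (degLex.degree g) := by
  refine ⟨degLex.degree_mem_support hg, fun ν hν => ?_⟩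
  rcases (degLex.le_degree hν).eq_or_lt with h | h
  · exact Or.inl (degLex.toSyn.injective h)
  · exact Or.inr (gradedLexLT_iff.2 h)

theorem isLeadingMonomial_add_of_totalDegree_lt {n : ℕ} {f g : MvPolynomial (Fin n) ℂ}
    (hf : f ≠ 0) (hg : g.totalDegree < (degLex.degree f).degree) :
    IsLeadingMonomial (f + g) (degLex.degree f) ∧
      coeff (degLex.degree f) (f + g) = degLex.leadingCoeff f := by
  have hlt := degLex_degree_lt_of_totalDegree_lt hg
  have hdeg : degLex.degree (f + g) = degLex.degree f := degree_add_of_lt hlt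
  have hlc : degLex.leadingCoeff (f + g) = degLex.leadingCoeff f := leadingCoeff_add_of_lt hlt
  have hne : f + g ≠ 0 := fun h => by
    rw [h, MonomialOrder.leadingCoeff_zero, eq_comm, degLex.leadingCoeff_eq_zero_iff] at hlc
    exact hf hlc
  exact ⟨hdeg ▸ isLeadingMonomial_degLex_degree hne, hdeg ▸ hlc⟩

section TransferMatrix

def transferMatrix {R : Type*} [Zero R] [One R] (a f : R) : Matrix (Fin 2) (Fin 2) R :=
  !![0, 1; a, f]

variable {σ R : Type*} [CommRing R]

@[simp]
theorem transferMatrix_mul_apply_zero (a f : R) (P : Matrix (Fin 2) (Fin 2) R) (k : Fin 2) :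
    (transferMatrix a f * P) 0 k = P 1 k := by
  simp [transferMatrix, Matrix.mul_apply, Fin.sum_univ_two]

@[simp]
theorem transferMatrix_mul_apply_one (a f : R) (P : Matrix (Fin 2) (Fin 2) R) (k : Fin 2) :
    (transferMatrix a f * P) 1 k = a * P 0 k + f * P 1 k := by
  simp [transferMatrix, Matrix.mul_apply, Fin.sum_univ_two]

theorem totalDegree_prod_transferMatrix_sub_single_lt (m : ℕ)
    (a f : Fin (m + 1) → MvPolynomial σ R) (w : Fin (m + 1) → ℕ)
    (ha : ∀ j, (a j).totalDegree = 0) (hf : ∀ j, (f j).totalDegree ≤ w j)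
    (hw : ∀ j, 0 < w j) (i k : Fin 2) :
    (((List.ofFn fun j => transferMatrix (a j) (f j)).reverse.prod
      - (Matrix.single 1 1 (∏ j, f j) : Matrix (Fin 2) (Fin 2) _)) i k).totalDegree
        < ∑ j, w j := by
  induction m generalizing i k with
  | zero =>
    fin_cases i <;> fin_cases k <;> simp [transferMatrix, ha, hw 0]
  | succ m ih =>
    rw [List.ofFn_succ', List.concat_eq_append, List.reverse_append, List.prod_append,
      Fin.prod_univ_castSucc, Fin.sum_univ_castSucc]
    have hE := ih (a ∘ Fin.castSucc) (f ∘ Fin.castSucc) (w ∘ Fin.castSucc) (fun _ => ha _)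
      (fun _ => hf _) (fun _ => hw _)
    simp only [Function.comp_apply] at hE
    have hF : (∏ j : Fin (m + 1), f j.castSucc).totalDegree ≤ ∑ j : Fin (m + 1), w j.castSucc :=
      (totalDegree_finsetProd _ _).trans (Finset.sum_le_sum fun _ _ => hf _)
    generalize (List.ofFn fun j : Fin (m + 1) =>
      transferMatrix (a j.castSucc) (f j.castSucc)).reverse.prod = P at hE ⊢
    generalize ∏ j : Fin (m + 1), f j.castSucc = F at hE hF ⊢
    rw [← sub_add_cancel P (Matrix.single 1 1 F)]
    generalize P - Matrix.single 1 1 F = E at hE ⊢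
    fin_cases i <;> fin_cases k <;>
      simp only [Fin.zero_eta, Fin.mk_one, List.reverse_singleton, List.prod_singleton,
        Matrix.sub_apply, transferMatrix_mul_apply_zero, transferMatrix_mul_apply_one,
        Matrix.add_apply, Matrix.single_apply_same, Matrix.single_apply_of_row_ne one_ne_zero,
        Matrix.single_apply_of_col_ne _ _ one_ne_zero, add_zero, sub_zero]
    · exact (hE 1 0).trans_le le_self_add
    · exact (totalDegree_add _ _).trans_lt
        (max_lt ((hE 1 1).trans_le le_self_add) (hF.trans_lt (Nat.lt_add_of_pos_right (hw _))))
    · exact totalDegree_mul_add_mul_lt (ha _) (hf _) (hE 0 0) (hE 1 0)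
    · rw [mul_add, add_sub_assoc, mul_comm F, add_sub_cancel_right]
      exact totalDegree_mul_add_mul_lt (ha _) (hf _) (hE 0 1) (hE 1 1)

theorem totalDegree_trace_prod_transferMatrix_sub_lt (m : ℕ)
    (a f : Fin (m + 1) → MvPolynomial σ R) (w : Fin (m + 1) → ℕ)
    (ha : ∀ j, (a j).totalDegree = 0) (hf : ∀ j, (f j).totalDegree ≤ w j)
    (hw : ∀ j, 0 < w j) :
    ((List.ofFn fun j => transferMatrix (a j) (f j)).reverse.prod.trace
      - ∏ j, f j).totalDegree < ∑ j, w j := by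
  have h00 := totalDegree_prod_transferMatrix_sub_single_lt m a f w ha hf hw 0 0
  have h11 := totalDegree_prod_transferMatrix_sub_single_lt m a f w ha hf hw 1 1
  rw [Matrix.sub_apply, Matrix.single_apply_of_row_ne one_ne_zero, sub_zero] at h00
  rw [Matrix.sub_apply, Matrix.single_apply_same] at h11
  rw [Matrix.trace_fin_two, add_sub_assoc]
  exact (totalDegree_add _ _).trans_lt (max_lt h00 h11)

end TransferMatrix

/-- The leading monomial of `Φ = λ² - λ Tr(Mₙ) + δ₁⋯δₙ` in the graded lexicographic
order is `y₁^{d₁-1} ⋯ yₙ^{dₙ-1}`, with leading coefficient `-λ d₁ ⋯ dₙ`. -/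
theorem stmt16 (n : ℕ) [NeZero n] (d : Fin n → ℕ) (hd : ∀ i, 2 ≤ d i)
    (p : Fin n → Polynomial ℂ) (hmonic : ∀ i, (p i).Monic)
    (hdeg : ∀ i, (p i).natDegree = d i)
    (δ : Fin n → ℂ) (lam : ℂ) (hlam : lam ≠ 0)
    (M : Matrix (Fin 2) (Fin 2) (MvPolynomial (Fin n) ℂ))
    (hM : M = ((List.ofFn fun j : Fin n =>
        (!![0, 1; -MvPolynomial.C (δ j), Polynomial.aeval (X j) (derivative (p j))] :
          Matrix (Fin 2) (Fin 2) (MvPolynomial (Fin n) ℂ))).reverse).prod)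
    (Φ : MvPolynomial (Fin n) ℂ)
    (hΦ : Φ = MvPolynomial.C (lam ^ 2)
        - MvPolynomial.C lam * (M 0 0 + M 1 1) + MvPolynomial.C (∏ i, δ i)) :
    IsLeadingMonomial Φ (Finsupp.equivFunOnFinite.symm fun i => d i - 1) ∧
      MvPolynomial.coeff (Finsupp.equivFunOnFinite.symm fun i => d i - 1) Φ =
        -lam * ∏ i, (d i : ℂ) := by
  obtain ⟨m, rfl⟩ : ∃ m, n = m + 1 := Nat.exists_eq_add_one.2 (Nat.pos_of_neZero n)
  set F := ∏ j, aeval (X j : MvPolynomial (Fin (m + 1)) ℂ) (derivative (p j))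
  have hp' : ∀ j, derivative (p j) ≠ 0 := fun j => derivative_ne_zero.2 (by grind)
  have hF_deg : degLex.degree F = Finsupp.equivFunOnFinite.symm (d · - 1) := by
    simpa only [natDegree_derivative, hdeg] using degLex.degree_prod_aeval_X hp'
  have hF_lc : degLex.leadingCoeff F = ∏ j, (d j : ℂ) := by
    simpa only [leadingCoeff_derivative, (hmonic _).leadingCoeff, hdeg, one_mul]
      using degLex.leadingCoeff_prod_aeval_X hp'
  have hF : F ≠ 0 := by
    rw [← degLex.leadingCoeff_ne_zero_iff, hF_lc]
    exact Finset.prod_ne_zero_iff.2 fun j _ => Nat.cast_ne_zero.2 (by grind)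
  have hcF : MvPolynomial.C (-lam) * F ≠ 0 :=
    mul_ne_zero (MvPolynomial.C_ne_zero.2 (neg_ne_zero.2 hlam)) hF
  have hcF_deg :
      degLex.degree (MvPolynomial.C (-lam) * F) = Finsupp.equivFunOnFinite.symm (d · - 1) := by
    rw [degLex.degree_mul' hcF, MonomialOrder.degree_C, zero_add, hF_deg]
  have htrace : (M.trace - F).totalDegree < ∑ j, (d j - 1) := by
    rw [hM]
    exact totalDegree_trace_prod_transferMatrix_sub_lt m _ _ _ (fun _ => by simp)
      (fun j => by rw [← degree_degLexDegree, degree_aeval_X, Finsupp.degree_single,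
        natDegree_derivative, hdeg]) (fun _ => by grind)
  have hΦ_split : Φ = MvPolynomial.C (-lam) * F +
      (MvPolynomial.C (-lam) * (M.trace - F) + MvPolynomial.C (lam ^ 2 + ∏ i, δ i)) := by
    rw [hΦ, ← Matrix.trace_fin_two, map_add, map_neg]
    ring
  rw [hΦ_split, ← hcF_deg]
  refine (isLeadingMonomial_add_of_totalDegree_lt hcF ?_).imp_right fun h => ?_
  · rw [hcF_deg, Finsupp.degree_eq_sum]
    exact totalDegree_C_mul_add_C_lt htrace _ _
  · rw [h, degLex.leadingCoeff_mul, MonomialOrder.leadingCoeff_C, hF_lc]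
end
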